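/- Let Ω ⊆ ℝ² be open, let b = b₁ + jb₂ : Ω → 𝔻 be continuously differentiable with b_z real-valued on Ω (i.e. Im(b_z) = 0, equivalently ∂_x b₂ + ∂_t b₁ = 0), and let W = u + jv : Ω → 𝔻 be twice continuously differentiable and satisfy W_z̄ = b·W̄ on Ω. Then u satisfies (¼)(u_xx − u_tt) = (b·b̄ + b_z)·u and v satisfies (¼)(v_xx − v_tt) = (b·b̄ − b_z)·v on Ω, where b·b̄ = b₁² − b₂² and b_z = ½(∂_x b₁ + ∂_t b₂) are real-valued. -/

import Mathlib

/-! Every `W = u + jv` solving `W_z̄ = bW̄` satisfies the first-order real system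
`u_x - v_t = 2(b₁u - b₂v)`, `v_x - u_t = 2(b₂u - b₁v)`. Differentiating the first equation in `x`,
the second in `t`, and adding, the mixed derivatives `v_tx = v_xt` cancel; the first derivatives
of `u, v` that remain are eliminated with the system itself, and the derivatives of `b` combine
into `(∂_xb₁ + ∂_tb₂)u - (∂_xb₂ + ∂_tb₁)v`, whose second term vanishes because `b_z` is real.
The equation for `v` is the one for `u` applied to `(v, u, -b)`, which solves the same system. -/

noncomputable section

open Filter Topology MeasureTheory

/-- Hyperbolic (duplex) numbers 𝔻, modeled as pairs `(Re z, Im z)` with `j ^ 2 = 1`. -/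
abbrev Hyp : Type := ℝ × ℝ

/-- Real part of a hyperbolic number. -/
def hre (a : Hyp) : ℝ := a.1

/-- Imaginary part of a hyperbolic number. -/
def him (a : Hyp) : ℝ := a.2

/-- The hyperbolic imaginary unit `j`. -/
def hj : Hyp := (0, 1)

/-- Hyperbolic multiplication: `(x+tj)(x'+t'j) = (xx'+tt') + (xt'+tx')j`. -/
def hmul (a b : Hyp) : Hyp := (a.1 * b.1 + a.2 * b.2, a.1 * b.2 + a.2 * b.1)

/-- Hyperbolic conjugation: `conj (x+tj) = x - tj`. -/
def hconj (a : Hyp) : Hyp := (a.1, -a.2)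

/-- Invertibility of a hyperbolic number: `x² ≠ t²`. -/
def IsInv (a : Hyp) : Prop := a.1 ^ 2 ≠ a.2 ^ 2

/-- Hyperbolic inverse `z⁻¹ = z̄ / |z|²` with `|z|² = x² - t²`. -/
def hinv (a : Hyp) : Hyp := (a.1 / (a.1 ^ 2 - a.2 ^ 2), -a.2 / (a.1 ^ 2 - a.2 ^ 2))

/-- Hyperbolic division. -/
def hdiv (a b : Hyp) : Hyp := hmul a (hinv b)

/-- Partial derivative in the first (`x`) variable. -/
def pdx (g : Hyp → ℝ) (p : Hyp) : ℝ := deriv (fun s => g (s, p.2)) p.1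

/-- Partial derivative in the second (`t`) variable. -/
def pdt (g : Hyp → ℝ) (p : Hyp) : ℝ := deriv (fun s => g (p.1, s)) p.2

/-- The wave operator `□g = g_xx - g_tt`. -/
def waveOp (g : Hyp → ℝ) (p : Hyp) : ℝ := pdx (pdx g) p - pdt (pdt g) p

/-- `w_z = ½(∂_x + j ∂_t) w = ½((u_x+v_t) + (v_x+u_t)j)` for a 𝔻-valued `w = u + jv`. -/
def dz (w : Hyp → Hyp) (p : Hyp) : Hyp :=
  ((pdx (fun q => (w q).1) p + pdt (fun q => (w q).2) p) / 2,
   (pdx (fun q => (w q).2) p + pdt (fun q => (w q).1) p) / 2)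

/-- `w_z̄ = ½(∂_x - j ∂_t) w = ½((u_x-v_t) + (v_x-u_t)j)` for a 𝔻-valued `w = u + jv`. -/
def dzbar (w : Hyp → Hyp) (p : Hyp) : Hyp :=
  ((pdx (fun q => (w q).1) p - pdt (fun q => (w q).2) p) / 2,
   (pdx (fun q => (w q).2) p - pdt (fun q => (w q).1) p) / 2)

/-- `f_z = ½(f_x + j f_t)` for a real-valued `f`. -/
def rz (f : Hyp → ℝ) (p : Hyp) : Hyp := (pdx f p / 2, pdt f p / 2)

/-- `f_z̄ = ½(f_x - j f_t)` for a real-valued `f`. -/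
def rzbar (f : Hyp → ℝ) (p : Hyp) : Hyp := (pdx f p / 2, -(pdt f p) / 2)

/-- 𝔻-differentiability at `z₀`: the difference quotient `(f z - f z₀)·(z - z₀)⁻¹`
tends to `d` as `z → z₀` through points with `z - z₀` invertible. -/
def HasHDerivAt (f : Hyp → Hyp) (d : Hyp) (z₀ : Hyp) : Prop :=
  Filter.Tendsto (fun z => hmul (f z - f z₀) (hinv (z - z₀)))
    (nhdsWithin z₀ {z | IsInv (z - z₀)}) (nhds d)

/-- `F Ḡ - F̄ G`. -/
def pairDenom (F G : Hyp → Hyp) (z : Hyp) : Hyp :=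
  hmul (F z) (hconj (G z)) - hmul (hconj (F z)) (G z)

/-- Characteristic coefficient `a_(F,G) = -(F̄ G_z̄ - F_z̄ Ḡ)/(F Ḡ - F̄ G)`. -/
def aFG (F G : Hyp → Hyp) (z : Hyp) : Hyp :=
  - hdiv (hmul (hconj (F z)) (dzbar G z) - hmul (dzbar F z) (hconj (G z))) (pairDenom F G z)

/-- Characteristic coefficient `b_(F,G) = (F G_z̄ - F_z̄ G)/(F Ḡ - F̄ G)`. -/
def bFG (F G : Hyp → Hyp) (z : Hyp) : Hyp :=
  hdiv (hmul (F z) (dzbar G z) - hmul (dzbar F z) (G z)) (pairDenom F G z)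

/-- Characteristic coefficient `A_(F,G) = -(F̄ G_z - F_z Ḡ)/(F Ḡ - F̄ G)`. -/
def AFG (F G : Hyp → Hyp) (z : Hyp) : Hyp :=
  - hdiv (hmul (hconj (F z)) (dz G z) - hmul (dz F z) (hconj (G z))) (pairDenom F G z)

/-- Characteristic coefficient `B_(F,G) = (F G_z - F_z G)/(F Ḡ - F̄ G)`. -/
def BFG (F G : Hyp → Hyp) (z : Hyp) : Hyp :=
  hdiv (hmul (F z) (dz G z) - hmul (dz F z) (G z)) (pairDenom F G z)

/-- A generating pair on `Ω`: twice continuously differentiable `F, G` with `Im(F̄G) ≠ 0`. -/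
def IsGenPair (F G : Hyp → Hyp) (Ω : Set Hyp) : Prop :=
  ContDiffOn ℝ 2 F Ω ∧ ContDiffOn ℝ 2 G Ω ∧ ∀ z ∈ Ω, him (hmul (hconj (F z)) (G z)) ≠ 0

/-- The idempotent `e₁ = (1+j)/2`. -/
def e1 : Hyp := (1/2, 1/2)

/-- The idempotent `e₂ = (1-j)/2`. -/
def e2 : Hyp := (1/2, -1/2)

/-- Contour integral `∮_{∂R} h dz` over the counterclockwise boundary of the rectangle
`[x₁,x₂] × [t₁,t₂]`, with hyperbolic multiplication (`dz = dx` on horizontal sides,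
`dz = j dt` on vertical sides). -/
def rectContourInt (h : Hyp → Hyp) (x₁ x₂ t₁ t₂ : ℝ) : Hyp :=
  ((∫ x in x₁..x₂, h (x, t₁)) - ∫ x in x₁..x₂, h (x, t₂)) +
    hmul hj ((∫ t in t₁..t₂, h (x₂, t)) - ∫ t in t₁..t₂, h (x₁, t))

/-- Integral `∫_{[z₀,z]} h dζ` along the straight segment from `z₀` to `z`,
with hyperbolic multiplication. -/
def segInt (h : Hyp → Hyp) (z₀ z : Hyp) : Hyp :=
  ∫ s in (0:ℝ)..1, hmul (h (z₀ + s • (z - z₀))) (z - z₀)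

/-- Natural powers in 𝔻. -/
def hpow (a : Hyp) : ℕ → Hyp
  | 0 => (1, 0)
  | n + 1 => hmul a (hpow a n)

/-- Integer powers in 𝔻 (for invertible base). -/
def hzpow (a : Hyp) : ℤ → Hyp
  | Int.ofNat n => hpow a n
  | Int.negSucc n => hinv (hpow a (n + 1))

section PartialDerivatives

variable {f g : Hyp → ℝ} {p : Hyp}

theorem hasDerivAt_pdx (hf : DifferentiableAt ℝ f p) :
    HasDerivAt (fun s => f (s, p.2)) (pdx f p) p.1 :=
  (hf.comp p.1 (differentiableAt_id.prodMk (differentiableAt_const p.2))).hasDerivAt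

theorem hasDerivAt_pdt (hf : DifferentiableAt ℝ f p) :
    HasDerivAt (fun s => f (p.1, s)) (pdt f p) p.2 :=
  (hf.comp p.2 ((differentiableAt_const p.1).prodMk differentiableAt_id)).hasDerivAt

theorem pdx_eq_fderiv (hf : DifferentiableAt ℝ f p) : pdx f p = fderiv ℝ f p (1, 0) :=
  (hf.hasFDerivAt.comp_hasDerivAt p.1
    ((hasDerivAt_id p.1).prodMk (hasDerivAt_const p.1 p.2))).deriv

theorem pdt_eq_fderiv (hf : DifferentiableAt ℝ f p) : pdt f p = fderiv ℝ f p (0, 1) :=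
  (hf.hasFDerivAt.comp_hasDerivAt p.2
    ((hasDerivAt_const p.2 p.1).prodMk (hasDerivAt_id p.2))).deriv

theorem Filter.EventuallyEq.pdx_eq (hfg : f =ᶠ[𝓝 p] g) : pdx f p = pdx g p :=
  EventuallyEq.deriv_eq <| hfg.comp_tendsto <|
    (continuous_id.prodMk continuous_const).tendsto' p.1 p rfl

theorem Filter.EventuallyEq.pdt_eq (hfg : f =ᶠ[𝓝 p] g) : pdt f p = pdt g p :=
  EventuallyEq.deriv_eq <| hfg.comp_tendsto <|
    (continuous_const.prodMk continuous_id).tendsto' p.2 p rfl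

theorem pdx_neg : pdx (fun q => -f q) p = -pdx f p := deriv.neg

theorem pdt_neg : pdt (fun q => -f q) p = -pdt f p := deriv.neg

theorem pdx_const_mul (c : ℝ) : pdx (fun q => c * f q) p = c * pdx f p :=
  congrFun (deriv_const_mul_field' c) p.1

theorem pdt_const_mul (c : ℝ) : pdt (fun q => c * f q) p = c * pdt f p :=
  congrFun (deriv_const_mul_field' c) p.2

theorem pdx_sub (hf : DifferentiableAt ℝ f p) (hg : DifferentiableAt ℝ g p) :
    pdx (fun q => f q - g q) p = pdx f p - pdx g p :=
  ((hasDerivAt_pdx hf).sub (hasDerivAt_pdx hg)).deriv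

theorem pdt_sub (hf : DifferentiableAt ℝ f p) (hg : DifferentiableAt ℝ g p) :
    pdt (fun q => f q - g q) p = pdt f p - pdt g p :=
  ((hasDerivAt_pdt hf).sub (hasDerivAt_pdt hg)).deriv

theorem pdx_mul (hf : DifferentiableAt ℝ f p) (hg : DifferentiableAt ℝ g p) :
    pdx (fun q => f q * g q) p = pdx f p * g p + f p * pdx g p :=
  ((hasDerivAt_pdx hf).mul (hasDerivAt_pdx hg)).deriv

theorem pdt_mul (hf : DifferentiableAt ℝ f p) (hg : DifferentiableAt ℝ g p) :
    pdt (fun q => f q * g q) p = pdt f p * g p + f p * pdt g p :=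
  ((hasDerivAt_pdt hf).mul (hasDerivAt_pdt hg)).deriv

end PartialDerivatives

section SecondDerivatives

variable {f : Hyp → ℝ} {p : Hyp}

theorem pdx_eventuallyEq_fderiv (hf : ContDiffAt ℝ 1 f p) :
    pdx f =ᶠ[𝓝 p] fun q => fderiv ℝ f q (1, 0) :=
  (hf.eventually (by simp)).mono fun _ hq => pdx_eq_fderiv (hq.differentiableAt one_ne_zero)

theorem pdt_eventuallyEq_fderiv (hf : ContDiffAt ℝ 1 f p) :
    pdt f =ᶠ[𝓝 p] fun q => fderiv ℝ f q (0, 1) :=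
  (hf.eventually (by simp)).mono fun _ hq => pdt_eq_fderiv (hq.differentiableAt one_ne_zero)

theorem hasFDerivAt_fderiv_apply (hf : ContDiffAt ℝ 2 f p) (w : Hyp) :
    HasFDerivAt (fun q => fderiv ℝ f q w) ((fderiv ℝ (fderiv ℝ f) p).flip w) p := by
  have hf' : DifferentiableAt ℝ (fderiv ℝ f) p :=
    (hf.fderiv_right (m := 1) (by norm_num)).differentiableAt one_ne_zero
  simpa using hf'.hasFDerivAt.clm_apply (hasFDerivAt_const w p)

theorem ContDiffAt.differentiableAt_pdx (hf : ContDiffAt ℝ 2 f p) :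
    DifferentiableAt ℝ (pdx f) p :=
  ((hasFDerivAt_fderiv_apply hf _).differentiableAt).congr_of_eventuallyEq
    (pdx_eventuallyEq_fderiv (hf.of_le one_le_two))

theorem ContDiffAt.differentiableAt_pdt (hf : ContDiffAt ℝ 2 f p) :
    DifferentiableAt ℝ (pdt f) p :=
  ((hasFDerivAt_fderiv_apply hf _).differentiableAt).congr_of_eventuallyEq
    (pdt_eventuallyEq_fderiv (hf.of_le one_le_two))

theorem pdx_pdt_comm (hf : ContDiffAt ℝ 2 f p) : pdx (pdt f) p = pdt (pdx f) p := by
  have hf1 : ContDiffAt ℝ 1 f p := hf.of_le one_le_two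
  rw [(pdt_eventuallyEq_fderiv hf1).pdx_eq, (pdx_eventuallyEq_fderiv hf1).pdt_eq,
    pdx_eq_fderiv (hasFDerivAt_fderiv_apply hf _).differentiableAt,
    pdt_eq_fderiv (hasFDerivAt_fderiv_apply hf _).differentiableAt,
    (hasFDerivAt_fderiv_apply hf _).fderiv, (hasFDerivAt_fderiv_apply hf _).fderiv]
  exact hf.isSymmSndFDerivAt (by simp [minSmoothness_of_isRCLikeNormedField]) _ _

end SecondDerivatives

theorem dzbar_eq_hmul_hconj_iff {W : Hyp → Hyp} {c p : Hyp} :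
    dzbar W p = hmul c (hconj (W p)) ↔
      pdx (fun q => (W q).1) p - pdt (fun q => (W q).2) p = 2 * (c.1 * (W p).1 - c.2 * (W p).2) ∧
      pdx (fun q => (W q).2) p - pdt (fun q => (W q).1) p = 2 * (c.2 * (W p).1 - c.1 * (W p).2) := by
  simp only [dzbar, hmul, hconj, Prod.ext_iff]
  constructor <;> rintro ⟨h₁, h₂⟩ <;> constructor <;> linarith

theorem waveOp_div_four_eq_of_system {u v b₁ b₂ : Hyp → ℝ} {p : Hyp}
    (hu : ContDiffAt ℝ 2 u p) (hv : ContDiffAt ℝ 2 v p)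
    (hb₁ : DifferentiableAt ℝ b₁ p) (hb₂ : DifferentiableAt ℝ b₂ p)
    (h₁ : ∀ᶠ q in 𝓝 p, pdx u q - pdt v q = 2 * (b₁ q * u q - b₂ q * v q))
    (h₂ : ∀ᶠ q in 𝓝 p, pdx v q - pdt u q = 2 * (b₂ q * u q - b₁ q * v q))
    (hbz : pdx b₂ p + pdt b₁ p = 0) :
    waveOp u p / 4 = (b₁ p ^ 2 - b₂ p ^ 2 + (pdx b₁ p + pdt b₂ p) / 2) * u p := by
  have hu₁ : DifferentiableAt ℝ u p := hu.differentiableAt two_ne_zero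
  have hv₁ : DifferentiableAt ℝ v p := hv.differentiableAt two_ne_zero
  have hx : pdx (pdx u) p - pdx (pdt v) p
      = 2 * (pdx b₁ p * u p + b₁ p * pdx u p - (pdx b₂ p * v p + b₂ p * pdx v p)) := by
    have := EventuallyEq.pdx_eq h₁
    rwa [pdx_sub hu.differentiableAt_pdx hv.differentiableAt_pdt, pdx_const_mul,
      pdx_sub (hb₁.fun_mul hu₁) (hb₂.fun_mul hv₁), pdx_mul hb₁ hu₁, pdx_mul hb₂ hv₁] at this
  have ht : pdt (pdx v) p - pdt (pdt u) p
      = 2 * (pdt b₂ p * u p + b₂ p * pdt u p - (pdt b₁ p * v p + b₁ p * pdt v p)) := by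
    have := EventuallyEq.pdt_eq h₂
    rwa [pdt_sub hv.differentiableAt_pdx hu.differentiableAt_pdt, pdt_const_mul,
      pdt_sub (hb₂.fun_mul hu₁) (hb₁.fun_mul hv₁), pdt_mul hb₂ hu₁, pdt_mul hb₁ hv₁] at this
  unfold waveOp
  linear_combination (hx + ht + 2 * b₁ p * h₁.self_of_nhds - 2 * b₂ p * h₂.self_of_nhds
    + pdx_pdt_comm hv - 2 * v p * hbz) / 4

/-- if `b = b₁ + jb₂ ∈ C¹(Ω)` has real-valued `b_z` (i.e. `∂_xb₂ + ∂_tb₁ = 0`)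
and `W = u + jv ∈ C²(Ω)` solves `W_z̄ = bW̄`, then `¼□u = (bb̄ + b_z)u` and
`¼□v = (bb̄ − b_z)v` on `Ω`, where `bb̄ = b₁² − b₂²` and `b_z = ½(∂_xb₁ + ∂_tb₂)`. -/
theorem vekua_real_imaginary_parts (Ω : Set Hyp) (hΩ : IsOpen Ω)
    (b : Hyp → Hyp) (hb : ContDiffOn ℝ 1 b Ω)
    (hbz_real : ∀ p ∈ Ω, pdx (fun q => (b q).2) p + pdt (fun q => (b q).1) p = 0)
    (W : Hyp → Hyp) (hW : ContDiffOn ℝ 2 W Ω)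
    (hVekua : ∀ p ∈ Ω, dzbar W p = hmul (b p) (hconj (W p))) :
    ∀ p ∈ Ω,
      waveOp (fun q => (W q).1) p / 4 =
        ((b p).1 ^ 2 - (b p).2 ^ 2 +
          (pdx (fun q => (b q).1) p + pdt (fun q => (b q).2) p) / 2) * (W p).1 ∧
      waveOp (fun q => (W q).2) p / 4 =
        ((b p).1 ^ 2 - (b p).2 ^ 2 -
          (pdx (fun q => (b q).1) p + pdt (fun q => (b q).2) p) / 2) * (W p).2 := by
  intro p hp
  have hΩp : Ω ∈ 𝓝 p := hΩ.mem_nhds hp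
  have hWp : ContDiffAt ℝ 2 W p := hW.contDiffAt hΩp
  have hbp : ContDiffAt ℝ 1 b p := hb.contDiffAt hΩp
  have hu : ContDiffAt ℝ 2 (fun q => (W q).1) p := contDiffAt_fst.comp p hWp
  have hv : ContDiffAt ℝ 2 (fun q => (W q).2) p := contDiffAt_snd.comp p hWp
  have hb₁ : DifferentiableAt ℝ (fun q => (b q).1) p :=
    (contDiffAt_fst.comp p hbp).differentiableAt one_ne_zero
  have hb₂ : DifferentiableAt ℝ (fun q => (b q).2) p :=
    (contDiffAt_snd.comp p hbp).differentiableAt one_ne_zero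
  have hsys := eventually_of_mem hΩp fun q hq => dzbar_eq_hmul_hconj_iff.1 (hVekua q hq)
  refine ⟨waveOp_div_four_eq_of_system hu hv hb₁ hb₂ (hsys.mono fun _ h => h.1)
    (hsys.mono fun _ h => h.2) (hbz_real p hp), ?_⟩
  have hv_eq := waveOp_div_four_eq_of_system hv hu hb₁.fun_neg hb₂.fun_neg
    (hsys.mono fun _ h => by linarith [h.2]) (hsys.mono fun _ h => by linarith [h.1])
    (by rw [pdx_neg, pdt_neg]; linarith [hbz_real p hp])
  rw [pdx_neg, pdt_neg] at hv_eq
  linear_combination hv_eq
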